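/- Microsteps strictly increase information: for every constructive event E and microstates p, p', if E ⊢ p ⇝ p' is a microstep, then p < p' in the Scott order on microstates. -/
import Mathlib


namespace EsterelMicro

/-- Signals are represented by natural numbers. -/
abbrev Signal := ℕ

/-- Scott booleans: unknown (⊥), true (+), false (−). -/
inductive SB : Type
  | bot
  | pos
  | neg
  deriving DecidableEq

namespace SB

/-- Scott (parallel) conjunction. -/
def and : SB → SB → SB
  | .neg, _ => .neg
  | _, .neg => .neg
  | .pos, .pos => .pos
  | _, _ => .bot

/-- Scott (parallel) disjunction. -/
def or : SB → SB → SB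
  | .pos, _ => .pos
  | _, .pos => .pos
  | .neg, .neg => .neg
  | _, _ => .bot

/-- Scott negation. -/
def not : SB → SB
  | .pos => .neg
  | .neg => .pos
  | .bot => .bot

/-- The flat information order on Scott booleans: `⊥ < +`, `⊥ < −`. -/
def le (a b : SB) : Prop := a = .bot ∨ a = b

/-- Strict flat information order. -/
def lt (a b : SB) : Prop := a = .bot ∧ b ≠ .bot

end SB

/-- A constructive event maps signals to Scott booleans (`none` = not in scope). -/
abbrev CEvent := Signal → Option SB

/-- The status of a signal in an event (`⊥` if the signal is not in scope). -/
def evalE (E : CEvent) (s : Signal) : SB := (E s).getD .bot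

/-- Update the status of a signal in an event. -/
def CEvent.update (E : CEvent) (s : Signal) (v : SB) : CEvent :=
  fun t => if t = s then some v else E t

/-- Input colors: the (precomputed) boolean Sel wire and the Scott-boolean
Go, Res, and Susp wires. -/
structure InColor where
  sel : Bool
  go : SB
  res : SB
  susp : SB
  deriving DecidableEq

namespace InColor

/-- Information order on input colors: equal Sel, componentwise flat order. -/
def le (i j : InColor) : Prop :=
  i.sel = j.sel ∧ i.go.le j.go ∧ i.res.le j.res ∧ i.susp.le j.susp

/-- Strict information order on input colors. -/
def lt (i j : InColor) : Prop := i.le j ∧ i ≠ j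

/-- The microstate is executed: started fresh or resumed
(`Go⁺ ∨ (Sel⁺ ∧ Res⁺)`). -/
def gores (i : InColor) : Prop := i.go = .pos ∨ (i.sel = true ∧ i.res = .pos)

/-- The microstate is not executed (`Go⁻ ∧ (Sel⁻ ∨ Res⁻)`). -/
def nogores (i : InColor) : Prop := i.go = .neg ∧ (i.sel = false ∨ i.res = .neg)

/-- Starting an inert statement: `Sel⁻, Go⁺`. -/
def isGo (i : InColor) : Prop := i.sel = false ∧ i.go = .pos

/-- Leaving dead an inert statement: `Sel⁻, Go⁻`. -/
def isNoGo (i : InColor) : Prop := i.sel = false ∧ i.go = .neg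

/-- Resuming an active statement: `Sel⁺, Res⁺, Susp⁻`. -/
def isRes (i : InColor) : Prop := i.sel = true ∧ i.res = .pos ∧ i.susp = .neg

end InColor

/-- Output colors (one-hot encoding of the completion code): `black k` means
the k-th completion wire is 1, `white K` means all completion wires outside
the finite set `K` are 0 (and no wire is known to be 1). -/
inductive OutColor : Type
  | black (k : ℕ)
  | white (K : Finset ℕ)
  deriving DecidableEq

namespace OutColor

/-- Information order on output colors. -/
def le : OutColor → OutColor → Prop
  | .white K, .white L => L ⊆ K
  | .white K, .black k => k ∈ K
  | .black k, .black l => k = l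
  | .black _, .white _ => False

/-- Strict information order on output colors. -/
def lt (a b : OutColor) : Prop := a.le b ∧ a ≠ b

/-- Union of output colors (used by the end rules of tests and sequences). -/
def union : OutColor → OutColor → OutColor
  | .white K, .white L => .white (K ∪ L)
  | .black k, .white K => if K = ∅ then .black k else .white (insert k K)
  | .white K, .black k => if K = ∅ then .black k else .white (insert k K)
  | .black k, .black l => .black (max k l)

/-- Map a function over the possible completion codes of an output color. -/
def map (f : ℕ → ℕ) : OutColor → OutColor
  | .black k => .black (f k)
  | .white K => .white (K.image f)

/-- Removal of the completion code 0 (used by the end rule of sequences). -/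
def remove0 : OutColor → OutColor
  | .black k => if k = 0 then .white ∅ else .black k
  | .white K => .white (K.erase 0)

end OutColor

/-- Completion-code shift `↑` used by the `shift` statement. -/
def kup (k : ℕ) : ℕ := if 2 ≤ k then k + 1 else k

/-- Completion-code decrement `↓` used by the `trap` statement. -/
def kdown (k : ℕ) : ℕ := if k < 2 then k else if k = 2 then 0 else k - 1

mutual

/-- A microstate: a microstate body decorated with an input and an
output color. -/
inductive MState : Type
  | node (ic : InColor) (b : MBody) (oc : OutColor)

/-- Bodies of microstates: loop-free Kernel Esterel statements whose
sub-statements are microstates. -/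
inductive MBody : Type
  | nothing
  | pause
  | exit (k : ℕ)
  | emit (s : Signal)
  | awaitImm (s : Signal)
  | trap (p : MState)
  | shift (p : MState)
  | suspend (s : Signal) (p : MState)
  | present (s : Signal) (p q : MState)
  | seq (p q : MState)
  | par (p q : MState)
  | sig (s : Signal) (p : MState)

end

namespace MState

/-- The input color of a microstate. -/
def ic : MState → InColor
  | .node i _ _ => i

/-- The body of a microstate. -/
def body : MState → MBody
  | .node _ b _ => b

/-- The output color of a microstate. -/
def oc : MState → OutColor
  | .node _ _ o => o

/-- Replace the input color of a microstate. -/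
def setIC : MState → InColor → MState
  | .node _ b o, i => .node i b o

/-- Replace the Go wire of a microstate. -/
def setGo (p : MState) (g : SB) : MState := p.setIC { p.ic with go := g }

/-- Replace the Res wire of a microstate. -/
def setRes (p : MState) (r : SB) : MState := p.setIC { p.ic with res := r }

/-- Replace the Susp wire of a microstate. -/
def setSusp (p : MState) (v : SB) : MState := p.setIC { p.ic with susp := v }

/-- Replace the output color of a microstate. -/
def setOC : MState → OutColor → MState
  | .node i b _, o => .node i b o

/-- The Sel wire as a Scott boolean. -/
def selSB (p : MState) : SB := if p.ic.sel then .pos else .neg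

end MState

mutual

/-- The status of the emitters of `s` inside a microstate: `+` if some emitter
of `s` has fired, `−` if all emitters of `s` are dead, `⊥` otherwise. -/
def MState.emitStatus (s : Signal) : MState → SB
  | .node _ b o => MBody.emitStatus s o b

/-- Auxiliary emitter status on bodies (the output color of the node is passed
for the `emit` case). -/
def MBody.emitStatus (s : Signal) (o : OutColor) : MBody → SB
  | .nothing => .neg
  | .pause => .neg
  | .exit _ => .neg
  | .awaitImm _ => .neg
  | .emit s' =>
      if s' = s then
        match o with
        | .black _ => .pos
        | .white K => if K = ∅ then .neg else .bot
      else .neg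
  | .trap p => p.emitStatus s
  | .shift p => p.emitStatus s
  | .suspend _ p => p.emitStatus s
  | .present _ p q => (p.emitStatus s).or (q.emitStatus s)
  | .seq p q => (p.emitStatus s).or (q.emitStatus s)
  | .par p q => (p.emitStatus s).or (q.emitStatus s)
  | .sig s' p => if s' = s then .neg else p.emitStatus s

end

/-- The `SuspNow` function computing the output color of a `suspend`
statement from the (Scott-boolean) suspension condition and the output color
of its body. -/
def suspNow : SB → OutColor → OutColor
  | .neg, o => o
  | .pos, .white K => if K = ∅ then .black 1 else .white (insert 1 (K.erase 0))
  | .pos, .black k => .black (max 1 k)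
  | .bot, .black 0 => .white {0, 1}
  | .bot, o => OutColor.union (.white {1}) o

/-- The (specification of the) parallel synchronizer: if one branch is dead
(`∘∅`) return the other output, otherwise take the max of the completion
codes. -/
def synchronize (o₁ o₂ : OutColor) : OutColor :=
  match o₁, o₂ with
  | .white K, .white L =>
      if K = ∅ then .white L
      else if L = ∅ then .white K
      else .white (K.biUnion fun k => L.image (max k))
  | .white K, .black k =>
      if K = ∅ then .black k else .white (K.image (max k))
  | .black k, .white L =>
      if L = ∅ then .black k else .white (L.image (max k))
  | .black k, .black l => .black (max k l)

open InColor OutColor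

/-- The microstep semantics: `Micro E p p'` means `E ⊢ p ⇝ p'`. -/
inductive Micro : CEvent → MState → MState → Prop
  -- rules for nothing
  | nothing_dead {E : CEvent} {i : InColor} (h : i.isNoGo) :
      Micro E (.node i .nothing (.white {0})) (.node i .nothing (.white ∅))
  | nothing_go {E : CEvent} {i : InColor} (h : i.isGo) :
      Micro E (.node i .nothing (.white {0})) (.node i .nothing (.black 0))
  -- rules for exit
  | exit_dead {E : CEvent} {i : InColor} {n : ℕ} (h : i.isNoGo) :
      Micro E (.node i (.exit n) (.white {n + 2})) (.node i (.exit n) (.white ∅))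
  | exit_go {E : CEvent} {i : InColor} {n : ℕ} (h : i.isGo) :
      Micro E (.node i (.exit n) (.white {n + 2})) (.node i (.exit n) (.black (n + 2)))
  -- rules for emit
  | emit_dead {E : CEvent} {i : InColor} {s : Signal} (h : i.isNoGo) :
      Micro E (.node i (.emit s) (.white {0})) (.node i (.emit s) (.white ∅))
  | emit_go {E : CEvent} {i : InColor} {s : Signal} (h : i.isGo) :
      Micro E (.node i (.emit s) (.white {0})) (.node i (.emit s) (.black 0))
  -- rules for pause
  | pause_no0 {E : CEvent} {i : InColor} {K : Finset ℕ}
      (h : i.res = .neg ∨ i.sel = false) (h0 : 0 ∈ K) :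
      Micro E (.node i .pause (.white K)) (.node i .pause (.white (K.erase 0)))
  | pause_no1 {E : CEvent} {i : InColor} {K : Finset ℕ}
      (h : i.go = .neg) (h1 : 1 ∈ K) :
      Micro E (.node i .pause (.white K)) (.node i .pause (.white (K.erase 1)))
  | pause_go {E : CEvent} {i : InColor} {o : OutColor}
      (h : i.go = .pos) (ho : o.lt (.black 1)) :
      Micro E (.node i .pause o) (.node i .pause (.black 1))
  | pause_res {E : CEvent} {i : InColor} {o : OutColor}
      (h : i.isRes) (ho : o.lt (.black 0)) :
      Micro E (.node i .pause o) (.node i .pause (.black 0))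
  -- rules for await immediate
  | await_no0 {E : CEvent} {i : InColor} {s : Signal} {K : Finset ℕ}
      (h : i.nogores ∨ evalE E s = .neg) (h0 : 0 ∈ K) :
      Micro E (.node i (.awaitImm s) (.white K))
        (.node i (.awaitImm s) (.white (K.erase 0)))
  | await_no1 {E : CEvent} {i : InColor} {s : Signal} {K : Finset ℕ}
      (h : i.nogores ∨ evalE E s = .pos) (h1 : 1 ∈ K) :
      Micro E (.node i (.awaitImm s) (.white K))
        (.node i (.awaitImm s) (.white (K.erase 1)))
  | await_pause {E : CEvent} {i : InColor} {s : Signal} {o : OutColor}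
      (h : i.gores) (hs : evalE E s = .neg) (ho : o.lt (.black 1)) :
      Micro E (.node i (.awaitImm s) o) (.node i (.awaitImm s) (.black 1))
  | await_done {E : CEvent} {i : InColor} {s : Signal} {o : OutColor}
      (h : i.gores) (hs : evalE E s = .pos) (ho : o.lt (.black 0)) :
      Micro E (.node i (.awaitImm s) o) (.node i (.awaitImm s) (.black 0))
  -- rules for trap
  | trap_start {E : CEvent} {i : InColor} {o : OutColor} {p : MState}
      (h : p.ic.lt i) :
      Micro E (.node i (.trap p) o) (.node i (.trap (p.setIC i)) o)
  | trap_ctx {E : CEvent} {i : InColor} {o : OutColor} {p p' : MState}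
      (h : Micro E p p') :
      Micro E (.node i (.trap p) o) (.node i (.trap p') o)
  | trap_end {E : CEvent} {i : InColor} {o : OutColor} {p : MState}
      (h : o.lt (p.oc.map kdown)) :
      Micro E (.node i (.trap p) o) (.node i (.trap p) (p.oc.map kdown))
  -- rules for shift
  | shift_start {E : CEvent} {i : InColor} {o : OutColor} {p : MState}
      (h : p.ic.lt i) :
      Micro E (.node i (.shift p) o) (.node i (.shift (p.setIC i)) o)
  | shift_ctx {E : CEvent} {i : InColor} {o : OutColor} {p p' : MState}
      (h : Micro E p p') :
      Micro E (.node i (.shift p) o) (.node i (.shift p') o)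
  | shift_end {E : CEvent} {i : InColor} {o : OutColor} {p : MState}
      (h : o.lt (p.oc.map kup)) :
      Micro E (.node i (.shift p) o) (.node i (.shift p) (p.oc.map kup))
  -- rules for suspend
  | susp_go {E : CEvent} {i : InColor} {o : OutColor} {s : Signal} {p : MState}
      (h : p.ic.go.lt i.go) :
      Micro E (.node i (.suspend s p) o) (.node i (.suspend s (p.setGo i.go)) o)
  | susp_res {E : CEvent} {i : InColor} {o : OutColor} {s : Signal} {p : MState}
      (h : p.ic.res.lt (i.res.and (p.selSB.and (evalE E s).not))) :
      Micro E (.node i (.suspend s p) o)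
        (.node i (.suspend s (p.setRes (i.res.and (p.selSB.and (evalE E s).not)))) o)
  | susp_susp {E : CEvent} {i : InColor} {o : OutColor} {s : Signal} {p : MState}
      (h : p.ic.susp.lt (i.susp.or (i.res.and (p.selSB.and (evalE E s))))) :
      Micro E (.node i (.suspend s p) o)
        (.node i (.suspend s (p.setSusp (i.susp.or (i.res.and (p.selSB.and (evalE E s)))))) o)
  | susp_ctx {E : CEvent} {i : InColor} {o : OutColor} {s : Signal} {p p' : MState}
      (h : Micro E p p') :
      Micro E (.node i (.suspend s p) o) (.node i (.suspend s p') o)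
  | susp_end_bot {E : CEvent} {i : InColor} {o : OutColor} {s : Signal} {p : MState}
      (h : o.lt (suspNow .bot p.oc)) :
      Micro E (.node i (.suspend s p) o) (.node i (.suspend s p) (suspNow .bot p.oc))
  | susp_end {E : CEvent} {i : InColor} {o : OutColor} {s : Signal} {p : MState}
      (h : o.lt (suspNow (i.susp.or (i.res.and (p.selSB.and (evalE E s)))) p.oc)) :
      Micro E (.node i (.suspend s p) o)
        (.node i (.suspend s p) (suspNow (i.susp.or (i.res.and (p.selSB.and (evalE E s)))) p.oc))
  -- rules for present (test)
  | if_goL {E : CEvent} {i : InColor} {o : OutColor} {s : Signal} {p q : MState}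
      (h : p.ic.go.lt (i.go.and (evalE E s))) :
      Micro E (.node i (.present s p q) o)
        (.node i (.present s (p.setGo (i.go.and (evalE E s))) q) o)
  | if_goR {E : CEvent} {i : InColor} {o : OutColor} {s : Signal} {p q : MState}
      (h : q.ic.go.lt (i.go.and (evalE E s).not)) :
      Micro E (.node i (.present s p q) o)
        (.node i (.present s p (q.setGo (i.go.and (evalE E s).not))) o)
  | if_resL {E : CEvent} {i : InColor} {o : OutColor} {s : Signal} {p q : MState}
      (h : p.ic.res.lt i.res) :
      Micro E (.node i (.present s p q) o) (.node i (.present s (p.setRes i.res) q) o)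
  | if_resR {E : CEvent} {i : InColor} {o : OutColor} {s : Signal} {p q : MState}
      (h : q.ic.res.lt i.res) :
      Micro E (.node i (.present s p q) o) (.node i (.present s p (q.setRes i.res)) o)
  | if_suspL {E : CEvent} {i : InColor} {o : OutColor} {s : Signal} {p q : MState}
      (h : p.ic.susp.lt i.susp) :
      Micro E (.node i (.present s p q) o) (.node i (.present s (p.setSusp i.susp) q) o)
  | if_suspR {E : CEvent} {i : InColor} {o : OutColor} {s : Signal} {p q : MState}
      (h : q.ic.susp.lt i.susp) :
      Micro E (.node i (.present s p q) o) (.node i (.present s p (q.setSusp i.susp)) o)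
  | if_ctxL {E : CEvent} {i : InColor} {o : OutColor} {s : Signal} {p p' q : MState}
      (h : Micro E p p') :
      Micro E (.node i (.present s p q) o) (.node i (.present s p' q) o)
  | if_ctxR {E : CEvent} {i : InColor} {o : OutColor} {s : Signal} {p q q' : MState}
      (h : Micro E q q') :
      Micro E (.node i (.present s p q) o) (.node i (.present s p q') o)
  | if_end {E : CEvent} {i : InColor} {o : OutColor} {s : Signal} {p q : MState}
      (h : o.lt (p.oc.union q.oc)) :
      Micro E (.node i (.present s p q) o) (.node i (.present s p q) (p.oc.union q.oc))
  -- rules for sequence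
  | seq_start {E : CEvent} {i : InColor} {o : OutColor} {p q : MState}
      (h : p.ic.lt i) :
      Micro E (.node i (.seq p q) o) (.node i (.seq (p.setIC i) q) o)
  | seq_res {E : CEvent} {i : InColor} {o : OutColor} {p q : MState}
      (h : q.ic.res.lt i.res) :
      Micro E (.node i (.seq p q) o) (.node i (.seq p (q.setRes i.res)) o)
  | seq_susp {E : CEvent} {i : InColor} {o : OutColor} {p q : MState}
      (h : q.ic.susp.lt i.susp) :
      Micro E (.node i (.seq p q) o) (.node i (.seq p (q.setSusp i.susp)) o)
  | seq_goP {E : CEvent} {i : InColor} {o : OutColor} {p q : MState}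
      (h : p.oc = .black 0) (hq : q.ic.go = .bot) :
      Micro E (.node i (.seq p q) o) (.node i (.seq p (q.setGo .pos)) o)
  | seq_goM {E : CEvent} {i : InColor} {o : OutColor} {p q : MState}
      (h : ¬ p.oc.le (.black 0)) (hq : q.ic.go = .bot) :
      Micro E (.node i (.seq p q) o) (.node i (.seq p (q.setGo .neg)) o)
  | seq_ctxL {E : CEvent} {i : InColor} {o : OutColor} {p p' q : MState}
      (h : Micro E p p') :
      Micro E (.node i (.seq p q) o) (.node i (.seq p' q) o)
  | seq_ctxR {E : CEvent} {i : InColor} {o : OutColor} {p q q' : MState}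
      (h : Micro E q q') :
      Micro E (.node i (.seq p q) o) (.node i (.seq p q') o)
  | seq_end {E : CEvent} {i : InColor} {o : OutColor} {p q : MState}
      (h : o.lt (p.oc.remove0.union q.oc)) :
      Micro E (.node i (.seq p q) o) (.node i (.seq p q) (p.oc.remove0.union q.oc))
  -- rules for parallel
  | par_startL {E : CEvent} {i : InColor} {o : OutColor} {p q : MState}
      (h : p.ic.lt i) :
      Micro E (.node i (.par p q) o) (.node i (.par (p.setIC i) q) o)
  | par_startR {E : CEvent} {i : InColor} {o : OutColor} {p q : MState}
      (h : q.ic.lt i) :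
      Micro E (.node i (.par p q) o) (.node i (.par p (q.setIC i)) o)
  | par_ctxL {E : CEvent} {i : InColor} {o : OutColor} {p p' q : MState}
      (h : Micro E p p') :
      Micro E (.node i (.par p q) o) (.node i (.par p' q) o)
  | par_ctxR {E : CEvent} {i : InColor} {o : OutColor} {p q q' : MState}
      (h : Micro E q q') :
      Micro E (.node i (.par p q) o) (.node i (.par p q') o)
  | par_end {E : CEvent} {i : InColor} {o : OutColor} {p q : MState}
      (h : o.lt (synchronize p.oc q.oc)) :
      Micro E (.node i (.par p q) o) (.node i (.par p q) (synchronize p.oc q.oc))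
  -- rules for local signal declaration
  | sig_start {E : CEvent} {i : InColor} {o : OutColor} {s : Signal} {p : MState}
      (h : p.ic.lt i) :
      Micro E (.node i (.sig s p) o) (.node i (.sig s (p.setIC i)) o)
  | sig_ctx {E : CEvent} {i : InColor} {o : OutColor} {s : Signal} {p p' : MState}
      (h : Micro (E.update s (p.emitStatus s)) p p') :
      Micro E (.node i (.sig s p) o) (.node i (.sig s p') o)
  | sig_end {E : CEvent} {i : InColor} {o : OutColor} {s : Signal} {p : MState}
      (h : o.lt p.oc) :
      Micro E (.node i (.sig s p) o) (.node i (.sig s p) p.oc)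

end EsterelMicro

namespace EsterelMicro

mutual

/-- The Scott (information) order on microstates: same base statement and
Sel values, componentwise flat order on the Go, Res, Susp wires of every
input color, and the information order on every output color. -/
inductive MLe : MState → MState → Prop
  | node {i j : InColor} {b b' : MBody} {o o' : OutColor}
      (hi : i.le j) (ho : o.le o') (hb : MBLe b b') :
      MLe (.node i b o) (.node j b' o')

/-- The Scott order on microstate bodies. -/
inductive MBLe : MBody → MBody → Prop
  | nothing : MBLe .nothing .nothing
  | pause : MBLe .pause .pause
  | exit {k : ℕ} : MBLe (.exit k) (.exit k)
  | emit {s : Signal} : MBLe (.emit s) (.emit s)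
  | awaitImm {s : Signal} : MBLe (.awaitImm s) (.awaitImm s)
  | trap {p p' : MState} (h : MLe p p') : MBLe (.trap p) (.trap p')
  | shift {p p' : MState} (h : MLe p p') : MBLe (.shift p) (.shift p')
  | suspend {s : Signal} {p p' : MState} (h : MLe p p') :
      MBLe (.suspend s p) (.suspend s p')
  | present {s : Signal} {p p' q q' : MState}
      (hp : MLe p p') (hq : MLe q q') :
      MBLe (.present s p q) (.present s p' q')
  | seq {p p' q q' : MState} (hp : MLe p p') (hq : MLe q q') :
      MBLe (.seq p q) (.seq p' q')
  | par {p p' q q' : MState} (hp : MLe p p') (hq : MLe q q') :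
      MBLe (.par p q) (.par p' q')
  | sig {s : Signal} {p p' : MState} (h : MLe p p') :
      MBLe (.sig s p) (.sig s p')

end

/-- The strict Scott order on microstates. -/
def MLt (p q : MState) : Prop := MLe p q ∧ p ≠ q


theorem sble_refl (a : SB) : a.le a := Or.inr rfl
theorem ile_refl (i : InColor) : i.le i := ⟨rfl, sble_refl _, sble_refl _, sble_refl _⟩
theorem ole_refl (o : OutColor) : o.le o := by cases o <;> simp [OutColor.le]

mutual
theorem MLe.refl : ∀ p, MLe p p
  | .node i b o => .node (ile_refl i) (ole_refl o) (MBLe.refl b)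
theorem MBLe.refl : ∀ b, MBLe b b
  | .nothing => .nothing
  | .pause => .pause
  | .exit _ => .exit
  | .emit _ => .emit
  | .awaitImm _ => .awaitImm
  | .trap p => .trap (MLe.refl p)
  | .shift p => .shift (MLe.refl p)
  | .suspend _ p => .suspend (MLe.refl p)
  | .present _ p q => .present (MLe.refl p) (MLe.refl q)
  | .seq p q => .seq (MLe.refl p) (MLe.refl q)
  | .par p q => .par (MLe.refl p) (MLe.refl q)
  | .sig _ p => .sig (MLe.refl p)
end

theorem mlt_oc {i : InColor} {b : MBody} {o o' : OutColor} (h : OutColor.lt o o') :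
    MLt (.node i b o) (.node i b o') :=
  ⟨.node (ile_refl i) h.1 (MBLe.refl b),
   fun e => h.2 (by cases e <;> rfl)⟩

theorem mlt_setIC {p : MState} {i : InColor} (h : p.ic.lt i) : MLt p (p.setIC i) := by
  obtain ⟨j, b, o⟩ := p
  simp only [MState.ic] at h
  exact ⟨.node h.1 (ole_refl o) (MBLe.refl b),
    fun e => h.2 (by cases e <;> rfl)⟩

theorem mlt_setGo {p : MState} {g : SB} (h : p.ic.go.lt g) : MLt p (p.setGo g) :=
  mlt_setIC ⟨⟨rfl, Or.inl h.1, sble_refl _, sble_refl _⟩,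
    fun e => h.2 ((congrArg InColor.go e).symm.trans h.1)⟩

theorem mlt_setRes {p : MState} {r : SB} (h : p.ic.res.lt r) : MLt p (p.setRes r) :=
  mlt_setIC ⟨⟨rfl, sble_refl _, Or.inl h.1, sble_refl _⟩,
    fun e => h.2 ((congrArg InColor.res e).symm.trans h.1)⟩

theorem mlt_setSusp {p : MState} {v : SB} (h : p.ic.susp.lt v) : MLt p (p.setSusp v) :=
  mlt_setIC ⟨⟨rfl, sble_refl _, sble_refl _, Or.inl h.1⟩,
    fun e => h.2 ((congrArg InColor.susp e).symm.trans h.1)⟩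

theorem mlt_trap {i : InColor} {o : OutColor} {p p' : MState} (h : MLt p p') :
    MLt (.node i (.trap p) o) (.node i (.trap p') o) :=
  ⟨.node (ile_refl i) (ole_refl o) (.trap h.1),
   fun e => h.2 (by cases e <;> rfl)⟩

theorem mlt_shift {i : InColor} {o : OutColor} {p p' : MState} (h : MLt p p') :
    MLt (.node i (.shift p) o) (.node i (.shift p') o) :=
  ⟨.node (ile_refl i) (ole_refl o) (.shift h.1),
   fun e => h.2 (by cases e <;> rfl)⟩

theorem mlt_susp {i : InColor} {o : OutColor} {s : Signal} {p p' : MState} (h : MLt p p') :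
    MLt (.node i (.suspend s p) o) (.node i (.suspend s p') o) :=
  ⟨.node (ile_refl i) (ole_refl o) (.suspend h.1),
   fun e => h.2 (by cases e <;> rfl)⟩

theorem mlt_presentL {i : InColor} {o : OutColor} {s : Signal} {p p' q : MState} (h : MLt p p') :
    MLt (.node i (.present s p q) o) (.node i (.present s p' q) o) :=
  ⟨.node (ile_refl i) (ole_refl o) (.present h.1 (MLe.refl q)),
   fun e => h.2 (by cases e <;> rfl)⟩

theorem mlt_presentR {i : InColor} {o : OutColor} {s : Signal} {p q q' : MState} (h : MLt q q') :
    MLt (.node i (.present s p q) o) (.node i (.present s p q') o) :=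
  ⟨.node (ile_refl i) (ole_refl o) (.present (MLe.refl p) h.1),
   fun e => h.2 (by cases e <;> rfl)⟩

theorem mlt_seqL {i : InColor} {o : OutColor} {p p' q : MState} (h : MLt p p') :
    MLt (.node i (.seq p q) o) (.node i (.seq p' q) o) :=
  ⟨.node (ile_refl i) (ole_refl o) (.seq h.1 (MLe.refl q)),
   fun e => h.2 (by cases e <;> rfl)⟩

theorem mlt_seqR {i : InColor} {o : OutColor} {p q q' : MState} (h : MLt q q') :
    MLt (.node i (.seq p q) o) (.node i (.seq p q') o) :=
  ⟨.node (ile_refl i) (ole_refl o) (.seq (MLe.refl p) h.1),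
   fun e => h.2 (by cases e <;> rfl)⟩

theorem mlt_parL {i : InColor} {o : OutColor} {p p' q : MState} (h : MLt p p') :
    MLt (.node i (.par p q) o) (.node i (.par p' q) o) :=
  ⟨.node (ile_refl i) (ole_refl o) (.par h.1 (MLe.refl q)),
   fun e => h.2 (by cases e <;> rfl)⟩

theorem mlt_parR {i : InColor} {o : OutColor} {p q q' : MState} (h : MLt q q') :
    MLt (.node i (.par p q) o) (.node i (.par p q') o) :=
  ⟨.node (ile_refl i) (ole_refl o) (.par (MLe.refl p) h.1),
   fun e => h.2 (by cases e <;> rfl)⟩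

theorem mlt_sig {i : InColor} {o : OutColor} {s : Signal} {p p' : MState} (h : MLt p p') :
    MLt (.node i (.sig s p) o) (.node i (.sig s p') o) :=
  ⟨.node (ile_refl i) (ole_refl o) (.sig h.1),
   fun e => h.2 (by cases e <;> rfl)⟩

theorem white_lt_erase {K : Finset ℕ} {n : ℕ} (h : n ∈ K) :
    OutColor.lt (.white K) (.white (K.erase n)) :=
  ⟨Finset.erase_subset _ _,
   fun e => (Finset.erase_ne_self.mpr h) (OutColor.white.inj e).symm⟩

theorem white_lt_black {K : Finset ℕ} {k : ℕ} (h : k ∈ K) :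
    OutColor.lt (.white K) (.black k) := ⟨h, by simp⟩

theorem white_lt_empty {K : Finset ℕ} (h : K ≠ ∅) :
    OutColor.lt (.white K) (.white ∅) :=
  ⟨Finset.empty_subset _, fun e => h (OutColor.white.inj e)⟩

/-- **Microsteps strictly increase information**: if `E ⊢ p ⇝ p'`, then
`p < p'` in the Scott order on microstates. -/
theorem micro_increases_information :
    ∀ (E : CEvent) (p p' : MState), Micro E p p' → MLt p p' := by
  intro E p p' h
  induction h with
  | nothing_dead h => exact mlt_oc (white_lt_empty (by simp))
  | nothing_go h => exact mlt_oc (white_lt_black (by simp))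
  | exit_dead h => exact mlt_oc (white_lt_empty (by simp))
  | exit_go h => exact mlt_oc (white_lt_black (by simp))
  | emit_dead h => exact mlt_oc (white_lt_empty (by simp))
  | emit_go h => exact mlt_oc (white_lt_black (by simp))
  | pause_no0 h h0 => exact mlt_oc (white_lt_erase h0)
  | pause_no1 h h1 => exact mlt_oc (white_lt_erase h1)
  | pause_go h ho => exact mlt_oc ho
  | pause_res h ho => exact mlt_oc ho
  | await_no0 h h0 => exact mlt_oc (white_lt_erase h0)
  | await_no1 h h1 => exact mlt_oc (white_lt_erase h1)
  | await_pause h hs ho => exact mlt_oc ho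
  | await_done h hs ho => exact mlt_oc ho
  | trap_start h => exact mlt_trap (mlt_setIC h)
  | trap_ctx h ih => exact mlt_trap ih
  | trap_end h => exact mlt_oc h
  | shift_start h => exact mlt_shift (mlt_setIC h)
  | shift_ctx h ih => exact mlt_shift ih
  | shift_end h => exact mlt_oc h
  | susp_go h => exact mlt_susp (mlt_setGo h)
  | susp_res h => exact mlt_susp (mlt_setRes h)
  | susp_susp h => exact mlt_susp (mlt_setSusp h)
  | susp_ctx h ih => exact mlt_susp ih
  | susp_end_bot h => exact mlt_oc h
  | susp_end h => exact mlt_oc h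
  | if_goL h => exact mlt_presentL (mlt_setGo h)
  | if_goR h => exact mlt_presentR (mlt_setGo h)
  | if_resL h => exact mlt_presentL (mlt_setRes h)
  | if_resR h => exact mlt_presentR (mlt_setRes h)
  | if_suspL h => exact mlt_presentL (mlt_setSusp h)
  | if_suspR h => exact mlt_presentR (mlt_setSusp h)
  | if_ctxL h ih => exact mlt_presentL ih
  | if_ctxR h ih => exact mlt_presentR ih
  | if_end h => exact mlt_oc h
  | seq_start h => exact mlt_seqL (mlt_setIC h)
  | seq_res h => exact mlt_seqR (mlt_setRes h)
  | seq_susp h => exact mlt_seqR (mlt_setSusp h)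
  | seq_goP h hq => exact mlt_seqR (mlt_setGo ⟨hq, by simp⟩)
  | seq_goM h hq => exact mlt_seqR (mlt_setGo ⟨hq, by simp⟩)
  | seq_ctxL h ih => exact mlt_seqL ih
  | seq_ctxR h ih => exact mlt_seqR ih
  | seq_end h => exact mlt_oc h
  | par_startL h => exact mlt_parL (mlt_setIC h)
  | par_startR h => exact mlt_parR (mlt_setIC h)
  | par_ctxL h ih => exact mlt_parL ih
  | par_ctxR h ih => exact mlt_parR ih
  | par_end h => exact mlt_oc h
  | sig_start h => exact mlt_sig (mlt_setIC h)
  | sig_ctx h ih => exact mlt_sig ih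
  | sig_end h => exact mlt_oc h

end EsterelMicro
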